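/- An ORB-tree T is trace-balanced (trace-balanced at every non-root internal node) if and only if its Haar-like basis diagonalizes its covariance matrix S; in this case σ(S) = {ℓ*(v,i) : v ∈ I, i ∈ L(v) arbitrary}, with the multiplicity of each eigenvalue λ equal to the number of internal nodes v with ℓ*(v,i) = λ for some (equivalently, any) i ∈ L(v). -/

import Mathlib

open Finset

noncomputable section
open scoped Classical

/-- A finite rooted tree on vertices `Fin n`, given by a parent function:
every vertex reaches the root by iterating `parent`, and the root is its own parent. -/
structure RTree where
  n : ℕ
  npos : 0 < n
  root : Fin n
  parent : Fin n → Fin n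
  parent_root : parent root = root
  reach : ∀ v, ∃ k, parent^[k] v = root

namespace RTree

variable (T : RTree)

/-- `u` is an ancestor of `v` (every vertex is an ancestor of itself). -/
def Anc (u v : Fin T.n) : Prop := ∃ k, T.parent^[k] v = u

/-- The children of a vertex. -/
def children (v : Fin T.n) : Finset (Fin T.n) :=
  Finset.univ.filter fun u => T.parent u = v ∧ u ≠ T.root

def IsLeaf (v : Fin T.n) : Prop := T.children v = ∅

/-- The leaf set of the tree. -/
def leaves : Finset (Fin T.n) := Finset.univ.filter fun v => T.IsLeaf v

/-- The internal (non-leaf) vertices; the root is internal. -/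
def internal : Finset (Fin T.n) := Finset.univ.filter fun v => ¬ T.IsLeaf v

/-- `L(v)`: the leaves descending from `v`. -/
def Ldesc (v : Fin T.n) : Finset (Fin T.n) := T.leaves.filter fun i => T.Anc v i

/-- Depth of a vertex: number of edges to the root. -/
def depth (v : Fin T.n) : ℕ := Nat.find (T.reach v)

/-- Number of vertices of the subtree rooted at `v`. -/
def subtreeSize (v : Fin T.n) : ℕ := (Finset.univ.filter fun u => T.Anc v u).card

/-- ORB-tree: the root has exactly one child and is not a leaf, and every other
internal vertex has exactly two children (so every vertex has degree 1 or 3). -/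
def IsORB : Prop :=
  ¬ T.IsLeaf T.root ∧ (T.children T.root).card = 1 ∧
  ∀ v, ¬ T.IsLeaf v → v ≠ T.root → (T.children v).card = 2

/-- The type of leaves. -/
abbrev Leaf := {i // i ∈ T.leaves}

/-- `δ_e` for the edge `e` above vertex `v`: the indicator vector of the leaves
descending from that edge. -/
def delta (v : Fin T.n) : T.Leaf → ℝ := fun i => if T.Anc v i.1 then 1 else 0

/-- The covariance matrix of the tree with branch lengths `ℓ`
(`ℓ v` is the length of the edge joining `v` to its parent):
`S = ∑_{e ∈ E} ℓ(e) δ_e δ_e'`.  Equivalently `S(i,j) = ∑_{e ∈ [i∧j,∘]} ℓ(e)`. -/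
def cov (ℓ : Fin T.n → ℝ) : Matrix T.Leaf T.Leaf ℝ :=
  ∑ v ∈ Finset.univ.filter (fun v => v ≠ T.root),
    ℓ v • Matrix.vecMulVec (T.delta v) (T.delta v)

/-- The trace branch length `ℓ*(i,v) = ∑_{e ∈ [i,v]} |L(e)| ℓ(e)`; the edge above `w`
lies on the path between `i` and `v` iff exactly one of `i`, `v` descends from `w`. -/
def lstar (ℓ : Fin T.n → ℝ) (i v : Fin T.n) : ℝ :=
  ∑ w ∈ Finset.univ.filter (fun w => w ≠ T.root ∧
      ((T.Anc w i ∧ ¬ T.Anc w v) ∨ (T.Anc w v ∧ ¬ T.Anc w i))),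
    ((T.Ldesc w).card : ℝ) * ℓ w

/-- `φ` is the family of Haar-like wavelets of `T`, indexed by internal vertices. -/
def IsHaarLike (φ : Fin T.n → T.Leaf → ℝ) : Prop :=
  (∀ i, φ T.root i = 1 / Real.sqrt ((T.leaves.card : ℝ))) ∧
  ∀ v ∈ T.internal, v ≠ T.root → ∃ c₀ c₁, c₀ ≠ c₁ ∧ T.children v = {c₀, c₁} ∧
    ∀ i : T.Leaf, φ v i =
      if i.1 ∈ T.Ldesc c₀ then
        Real.sqrt (((T.Ldesc c₁).card : ℝ) / (((T.Ldesc c₀).card : ℝ) * ((T.Ldesc v).card : ℝ)))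
      else if i.1 ∈ T.Ldesc c₁ then
        - Real.sqrt (((T.Ldesc c₀).card : ℝ) / (((T.Ldesc c₁).card : ℝ) * ((T.Ldesc v).card : ℝ)))
      else 0

/-- `T` is trace-balanced (at every non-root internal vertex). -/
def TraceBalanced (ℓ : Fin T.n → ℝ) : Prop :=
  ∀ v ∈ T.internal, v ≠ T.root → ∀ i ∈ T.Ldesc v, ∀ j ∈ T.Ldesc v,
    T.lstar ℓ i v = T.lstar ℓ j v

end RTree

/-!
`S = ∑_e ℓ(e) δ_e δ_eᵀ`, and `⟨δ_e, φ_v⟩` vanishes unless the edge `e` lies strictly below `v`,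
in which case `φ_v` is constant on `L(e)`. Hence `S φ_v` is the pointwise product
`ℓ*(·, v) φ_v`. In an ORB-tree `|I| = |L|`, so the Haar-like vectors are the columns of an
orthogonal matrix `W`; thus `Wᵀ S W` is diagonal iff every `φ_v` is an eigenvector of `S`, i.e.
iff `ℓ*(·, v)` is constant on the support `L(v)` of `φ_v` (for the root this follows from the
other vertices, as `Wᵀ S W` is symmetric). Then `S = W diag(ℓ*) Wᵀ`, which
gives the characteristic polynomial, and the spectrum is its set of roots.
-/

open Matrix

theorem Real.mul_sqrt_div_mul_eq {a b c : ℝ} (ha : 0 < a) (hb : 0 < b) (hc : 0 < c) :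
    a * √(b / (a * c)) = b * √(a / (b * c)) := by
  refine (pow_left_inj₀ (by positivity) (by positivity) two_ne_zero).1 ?_
  rw [mul_pow, mul_pow, Real.sq_sqrt (by positivity), Real.sq_sqrt (by positivity)]
  field_simp

theorem Matrix.charpoly_mul_mul_of_mul_eq_one {m n R : Type*} [Fintype m] [Fintype n]
    [DecidableEq m] [DecidableEq n] [CommRing R] {W : Matrix m n R} {V : Matrix n m R}
    (hVW : V * W = 1) (hcard : Fintype.card m = Fintype.card n) (A : Matrix n n R) :
    (W * A * V).charpoly = A.charpoly := by
  rw [Matrix.mul_assoc, charpoly_mul_comm_of_le _ _ hcard.ge, hcard, Nat.sub_self, pow_zero,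
    one_mul, Matrix.mul_assoc, hVW, Matrix.mul_one]

theorem Matrix.spectrum_eq_image_of_charpoly_eq_prod {K n ι : Type*} [Field K] [Fintype n]
    [DecidableEq n] {A : Matrix n n K} {s : Finset ι} {g : ι → K}
    (h : A.charpoly = ∏ i ∈ s, (Polynomial.X - Polynomial.C (g i))) : spectrum K A = g '' s := by
  ext r
  rw [mem_spectrum_iff_isRoot_charpoly, h, Polynomial.isRoot_prod]
  simp [sub_eq_zero, eq_comm]

namespace RTree

variable {T : RTree}

theorem anc_refl (v : Fin T.n) : T.Anc v v := ⟨0, rfl⟩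

theorem Anc.trans {u v w : Fin T.n} (h₁ : T.Anc u v) (h₂ : T.Anc v w) : T.Anc u w := by
  obtain ⟨a, rfl⟩ := h₁
  obtain ⟨b, rfl⟩ := h₂
  exact ⟨a + b, Function.iterate_add_apply ..⟩

theorem iterate_parent_root (k : ℕ) : T.parent^[k] T.root = T.root :=
  Function.iterate_fixed T.parent_root k

theorem eq_root_of_anc_root {u : Fin T.n} (h : T.Anc u T.root) : u = T.root := by
  obtain ⟨k, rfl⟩ := h
  exact iterate_parent_root k

/-- A cycle of `parent` through `v` never leaves `v`, yet `v` reaches the root. -/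
theorem eq_root_of_iterate_parent_eq_self {v : Fin T.n} {k : ℕ} (hk : 0 < k)
    (h : T.parent^[k] v = v) : v = T.root := by
  obtain ⟨K, hK⟩ := T.reach v
  calc v = T.parent^[k * K] v := by rw [Function.iterate_mul, Function.iterate_fixed h K]
    _ = T.parent^[k * K - K] (T.parent^[K] v) := by
        rw [← Function.iterate_add_apply, Nat.sub_add_cancel (Nat.le_mul_of_pos_left K hk)]
    _ = T.root := by rw [hK, iterate_parent_root]

theorem Anc.antisymm {u v : Fin T.n} (h₁ : T.Anc u v) (h₂ : T.Anc v u) : u = v := by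
  obtain ⟨a, rfl⟩ := h₁
  obtain ⟨b, hb⟩ := h₂
  by_cases hab : b + a = 0
  · rw [Nat.eq_zero_of_add_eq_zero_left hab, Function.iterate_zero_apply]
  · have hv : v = T.root :=
      eq_root_of_iterate_parent_eq_self (Nat.pos_of_ne_zero hab)
        (by rw [Function.iterate_add_apply, hb])
    rw [hv, iterate_parent_root]

theorem anc_total {u w i : Fin T.n} (hu : T.Anc u i) (hw : T.Anc w i) :
    T.Anc u w ∨ T.Anc w u := by
  obtain ⟨a, rfl⟩ := hu
  obtain ⟨b, rfl⟩ := hw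
  rcases le_total a b with h | h
  · exact .inr ⟨b - a, by rw [← Function.iterate_add_apply, Nat.sub_add_cancel h]⟩
  · exact .inl ⟨a - b, by rw [← Function.iterate_add_apply, Nat.sub_add_cancel h]⟩

theorem mem_children {u v : Fin T.n} : u ∈ T.children v ↔ T.parent u = v ∧ u ≠ T.root := by
  simp [children]

theorem anc_of_mem_children {c v : Fin T.n} (h : c ∈ T.children v) : T.Anc v c :=
  ⟨1, (mem_children.1 h).1⟩

theorem exists_mem_children_anc {v w : Fin T.n} (h : T.Anc v w) (hne : v ≠ w) :
    ∃ c ∈ T.children v, T.Anc c w := by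
  have hk : T.parent^[Nat.find h] w = v := Nat.find_spec h
  obtain ⟨k, hk'⟩ : ∃ k, Nat.find h = k + 1 :=
    Nat.exists_eq_add_one.2 (Nat.pos_of_ne_zero fun h0 => hne (by rw [← hk, h0]; rfl))
  rw [hk', Function.iterate_succ_apply'] at hk
  refine ⟨T.parent^[k] w, mem_children.2 ⟨hk, fun hroot => ?_⟩, k, rfl⟩
  exact Nat.find_min h (m := k) (by omega) (by rw [hroot, ← hk, hroot, T.parent_root])

theorem not_anc_of_mem_children {v c c' : Fin T.n} (hc : c ∈ T.children v)
    (hc' : c' ∈ T.children v) (hne : c ≠ c') : ¬ T.Anc c c' := by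
  rintro ⟨k, hk⟩
  obtain ⟨k, rfl⟩ : ∃ j, k = j + 1 :=
    Nat.exists_eq_add_one.2 (Nat.pos_of_ne_zero fun h0 => hne (by rw [← hk, h0]; rfl))
  rw [Function.iterate_succ_apply, (mem_children.1 hc').1] at hk
  have hcv : c = v := Anc.antisymm ⟨k, hk⟩ (anc_of_mem_children hc)
  refine (mem_children.1 hc).2 (eq_root_of_iterate_parent_eq_self one_pos ?_)
  rw [Function.iterate_one, (mem_children.1 hc).1, hcv]

theorem depth_lt_of_mem_children {c v : Fin T.n} (h : c ∈ T.children v) :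
    T.depth v < T.depth c := by
  obtain ⟨hp, hc⟩ := mem_children.1 h
  have hspec : T.parent^[T.depth c] c = T.root := Nat.find_spec (T.reach c)
  obtain ⟨k, hk⟩ : ∃ k, T.depth c = k + 1 :=
    Nat.exists_eq_add_one.2 (Nat.pos_of_ne_zero fun h0 => hc (by rw [← hspec, h0]; rfl))
  rw [hk, Function.iterate_succ_apply, hp] at hspec
  have : T.depth v ≤ k := Nat.find_le hspec
  omega

theorem mem_leaves {v : Fin T.n} : v ∈ T.leaves ↔ T.IsLeaf v := by simp [leaves]

theorem mem_internal {v : Fin T.n} : v ∈ T.internal ↔ ¬ T.IsLeaf v := by simp [internal]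

theorem mem_Ldesc {i v : Fin T.n} : i ∈ T.Ldesc v ↔ i ∈ T.leaves ∧ T.Anc v i := by
  simp [Ldesc]

theorem Ldesc_subset_of_anc {v w : Fin T.n} (h : T.Anc v w) : T.Ldesc w ⊆ T.Ldesc v :=
  fun _ hi => mem_Ldesc.2 ⟨(mem_Ldesc.1 hi).1, h.trans (mem_Ldesc.1 hi).2⟩

theorem disjoint_Ldesc {v w : Fin T.n} (hvw : ¬ T.Anc v w) (hwv : ¬ T.Anc w v) :
    Disjoint (T.Ldesc v) (T.Ldesc w) :=
  disjoint_left.2 fun _ hv hw =>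
    (anc_total (mem_Ldesc.1 hv).2 (mem_Ldesc.1 hw).2).elim hvw hwv

theorem disjoint_Ldesc_of_mem_children {v c c' : Fin T.n} (hc : c ∈ T.children v)
    (hc' : c' ∈ T.children v) (hne : c ≠ c') : Disjoint (T.Ldesc c) (T.Ldesc c') :=
  disjoint_Ldesc (not_anc_of_mem_children hc hc' hne) (not_anc_of_mem_children hc' hc hne.symm)

/-- A deepest descendant of `v` is a leaf. -/
theorem Ldesc_nonempty (v : Fin T.n) : (T.Ldesc v).Nonempty := by
  obtain ⟨w, hw, hmax⟩ := (univ.filter (T.Anc v ·)).exists_max_image T.depth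
    ⟨v, mem_filter.2 ⟨mem_univ v, anc_refl v⟩⟩
  have hvw : T.Anc v w := (mem_filter.1 hw).2
  refine ⟨w, mem_Ldesc.2 ⟨mem_leaves.2 ?_, hvw⟩⟩
  by_contra hleaf
  obtain ⟨c, hc⟩ := nonempty_iff_ne_empty.2 hleaf
  exact (depth_lt_of_mem_children hc).not_ge
    (hmax c (mem_filter.2 ⟨mem_univ c, hvw.trans (anc_of_mem_children hc)⟩))

theorem Ldesc_eq_union {v c₀ c₁ : Fin T.n} (hv : ¬ T.IsLeaf v)
    (hcc : T.children v = {c₀, c₁}) : T.Ldesc v = T.Ldesc c₀ ∪ T.Ldesc c₁ := by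
  have hc : ∀ c, c ∈ T.children v ↔ c = c₀ ∨ c = c₁ := by simp [hcc]
  refine Subset.antisymm (fun i hi => ?_) (union_subset
    (Ldesc_subset_of_anc (anc_of_mem_children ((hc c₀).2 (.inl rfl))))
    (Ldesc_subset_of_anc (anc_of_mem_children ((hc c₁).2 (.inr rfl)))))
  obtain ⟨hi, hvi⟩ := mem_Ldesc.1 hi
  obtain ⟨c, hcv, hci⟩ := exists_mem_children_anc hvi (by rintro rfl; exact hv (mem_leaves.1 hi))
  rcases (hc c).1 hcv with rfl | rfl
  · exact mem_union_left _ (mem_Ldesc.2 ⟨hi, hci⟩)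
  · exact mem_union_right _ (mem_Ldesc.2 ⟨hi, hci⟩)

theorem sum_card_children : ∑ v, #(T.children v) = T.n - 1 := by
  have h := card_eq_sum_card_fiberwise (s := univ.erase T.root) (t := univ) (f := T.parent)
    fun _ _ => mem_univ _
  rw [card_erase_of_mem (mem_univ _), card_univ, Fintype.card_fin] at h
  rw [h]
  refine sum_congr rfl fun v _ => congrArg card (ext fun u => ?_)
  simp [mem_children, and_comm]

/-- Counting edges: the root has one child and every other internal vertex two. -/
theorem card_internal_eq_card_leaves (hT : T.IsORB) : #T.internal = #T.leaves := by
  have hroot : T.root ∈ T.internal := mem_internal.2 hT.1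
  have hsplit : ∑ v ∈ T.leaves, #(T.children v) + ∑ v ∈ T.internal, #(T.children v)
      = ∑ v, #(T.children v) :=
    sum_filter_add_sum_filter_not univ T.IsLeaf _
  have hleaves : ∑ v ∈ T.leaves, #(T.children v) = 0 :=
    sum_eq_zero fun v hv => by rw [mem_leaves.1 hv, card_empty]
  have hinternal : ∑ v ∈ T.internal, #(T.children v) = 1 + (#T.internal - 1) * 2 := by
    rw [← add_sum_erase _ _ hroot, hT.2.1, sum_congr rfl fun v hv =>
      hT.2.2 v (mem_internal.1 (mem_of_mem_erase hv)) (ne_of_mem_erase hv),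
      sum_const, card_erase_of_mem hroot, smul_eq_mul]
  have hpart : #T.leaves + #T.internal = T.n := by
    rw [leaves, internal, card_filter_add_card_filter_not, card_univ, Fintype.card_fin]
  have hpos : 0 < #T.internal := card_pos.2 ⟨_, hroot⟩
  have := sum_card_children (T := T)
  omega

/-- `L(w)` as a set of elements of `T.Leaf`. -/
def leafDesc (T : RTree) (w : Fin T.n) : Finset T.Leaf := univ.filter fun i => T.Anc w i.1

theorem mem_leafDesc {w : Fin T.n} {i : T.Leaf} : i ∈ T.leafDesc w ↔ i.1 ∈ T.Ldesc w := by
  simp [leafDesc, mem_Ldesc, i.2]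

theorem card_leafDesc (w : Fin T.n) : #(T.leafDesc w) = #(T.Ldesc w) := by
  have : T.leafDesc w = (T.Ldesc w).subtype (· ∈ T.leaves) := by
    ext i; rw [mem_leafDesc, mem_subtype]
  rw [this, card_subtype, filter_true_of_mem fun i hi => (mem_Ldesc.1 hi).1]

theorem sum_leafDesc_eq_card_mul {w : Fin T.n} {f : T.Leaf → ℝ} {a : ℝ}
    (h : ∀ i ∈ T.leafDesc w, f i = a) : ∑ i ∈ T.leafDesc w, f i = #(T.Ldesc w) * a := by
  rw [sum_congr rfl h, sum_const, nsmul_eq_mul, card_leafDesc]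

theorem cast_card_Ldesc_pos (v : Fin T.n) : (0 : ℝ) < #(T.Ldesc v) :=
  Nat.cast_pos.2 (card_pos.2 (Ldesc_nonempty v))

theorem card_leaves_pos : 0 < #T.leaves :=
  card_pos.2 ((Ldesc_nonempty T.root).mono (filter_subset _ _))

theorem sum_eq_sum_leafDesc {w : Fin T.n} {f : T.Leaf → ℝ}
    (h : ∀ i : T.Leaf, i.1 ∉ T.Ldesc w → f i = 0) : ∑ i, f i = ∑ i ∈ T.leafDesc w, f i :=
  (sum_subset (subset_univ _) fun i _ hi => h i (mt mem_leafDesc.2 hi)).symm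

theorem dotProduct_delta (w : Fin T.n) (x : T.Leaf → ℝ) :
    T.delta w ⬝ᵥ x = ∑ i ∈ T.leafDesc w, x i := by
  simp [dotProduct, delta, leafDesc, sum_filter]

theorem cov_mulVec_apply (ℓ : Fin T.n → ℝ) (x : T.Leaf → ℝ) (j : T.Leaf) :
    (T.cov ℓ *ᵥ x) j = ∑ w ∈ univ.filter (· ≠ T.root), ℓ w * (T.delta w j * (T.delta w ⬝ᵥ x)) := by
  simp [cov, Matrix.sum_mulVec, Matrix.smul_mulVec, Matrix.vecMulVec_mulVec, mul_comm]

theorem cov_transpose (ℓ : Fin T.n → ℝ) : (T.cov ℓ)ᵀ = T.cov ℓ := by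
  simp [cov, Matrix.transpose_sum, Matrix.transpose_smul, Matrix.transpose_vecMulVec]

theorem lstar_eq_sum {ℓ : Fin T.n → ℝ} {j v : Fin T.n} (hj : T.Anc v j) :
    T.lstar ℓ j v = ∑ w ∈ univ.filter (fun w => w ≠ T.root ∧ T.Anc w j ∧ T.Anc v w ∧ w ≠ v),
      #(T.Ldesc w) * ℓ w := by
  refine sum_congr (filter_congr fun w _ => and_congr_right fun _ => ?_) fun _ _ => rfl
  constructor
  · rintro (⟨hwj, hwv⟩ | ⟨hwv, hwj⟩)
    · exact ⟨hwj, (anc_total hwj hj).resolve_left hwv, fun e => hwv (e ▸ anc_refl w)⟩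
    · exact absurd (hwv.trans hj) hwj
  · rintro ⟨hwj, hvw, hne⟩
    exact .inl ⟨hwj, fun hwv => hne (Anc.antisymm hwv hvw)⟩

def waveletMatrix (T : RTree) (φ : Fin T.n → T.Leaf → ℝ) : Matrix T.Leaf T.internal ℝ :=
  of fun i v => φ v i

theorem transpose_waveletMatrix_mul_mul_apply (φ : Fin T.n → T.Leaf → ℝ)
    (A : Matrix T.Leaf T.Leaf ℝ) (u v : T.internal) :
    ((T.waveletMatrix φ)ᵀ * A * T.waveletMatrix φ) u v = ∑ j, ∑ i, φ u j * A j i * φ v i := by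
  simp only [mul_apply, transpose_apply, waveletMatrix, of_apply, sum_mul]
  exact sum_comm

theorem isSymm_transpose_mul_cov_mul {m : Type*} [Fintype m] (ℓ : Fin T.n → ℝ)
    (W : Matrix T.Leaf m ℝ) : (Wᵀ * T.cov ℓ * W).IsSymm := by
  simp [IsSymm, transpose_mul, cov_transpose, Matrix.mul_assoc]

namespace IsHaarLike

variable {φ : Fin T.n → T.Leaf → ℝ}

/-- `n₀` and `n₁` are the numbers of leaves below the two children of `v`. -/
theorem exists_sum_leafDesc (hφ : T.IsHaarLike φ) {v : Fin T.n} (hv : v ∈ T.internal)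
    (hvr : v ≠ T.root) : ∃ n₀ n₁ : ℝ, 0 < n₀ ∧ 0 < n₁ ∧ ∀ f : ℝ → ℝ,
      ∑ i ∈ T.leafDesc v, f (φ v i) =
        n₀ * f √(n₁ / (n₀ * (n₀ + n₁))) + n₁ * f (-√(n₀ / (n₁ * (n₀ + n₁)))) := by
  obtain ⟨c₀, c₁, hne, hcc, hval⟩ := hφ.2 v hv hvr
  have hc : ∀ c, c ∈ T.children v ↔ c = c₀ ∨ c = c₁ := by simp [hcc]
  have hdisj := disjoint_Ldesc_of_mem_children ((hc c₀).2 (.inl rfl)) ((hc c₁).2 (.inr rfl)) hne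
  have hunion : T.leafDesc v = T.leafDesc c₀ ∪ T.leafDesc c₁ := by
    ext i; simp only [mem_union, mem_leafDesc, Ldesc_eq_union (mem_internal.1 hv) hcc]
  have hcard : (#(T.Ldesc v) : ℝ) = #(T.Ldesc c₀) + #(T.Ldesc c₁) := by
    rw [Ldesc_eq_union (mem_internal.1 hv) hcc, card_union_of_disjoint hdisj, Nat.cast_add]
  refine ⟨_, _, cast_card_Ldesc_pos c₀, cast_card_Ldesc_pos c₁, fun f => ?_⟩
  rw [hunion, sum_union (disjoint_left.2 fun i h₀ h₁ =>
      disjoint_left.1 hdisj (mem_leafDesc.1 h₀) (mem_leafDesc.1 h₁)),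
    sum_leafDesc_eq_card_mul fun i hi => by rw [hval i, if_pos (mem_leafDesc.1 hi)],
    sum_leafDesc_eq_card_mul fun i hi => by
      rw [hval i, if_neg (disjoint_right.1 hdisj (mem_leafDesc.1 hi)), if_pos (mem_leafDesc.1 hi)],
    ← hcard]

theorem apply_eq_zero (hφ : T.IsHaarLike φ) {v : Fin T.n} (hv : v ∈ T.internal) {i : T.Leaf}
    (hi : i.1 ∉ T.Ldesc v) : φ v i = 0 := by
  by_cases hvr : v = T.root
  · exact absurd (mem_Ldesc.2 ⟨i.2, hvr ▸ T.reach i.1⟩) hi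
  obtain ⟨c₀, c₁, -, hcc, hval⟩ := hφ.2 v hv hvr
  rw [Ldesc_eq_union (mem_internal.1 hv) hcc, mem_union, not_or] at hi
  rw [hval i, if_neg hi.1, if_neg hi.2]

theorem apply_ne_zero (hφ : T.IsHaarLike φ) {v : Fin T.n} (hv : v ∈ T.internal) {i : T.Leaf}
    (hi : i.1 ∈ T.Ldesc v) : φ v i ≠ 0 := by
  by_cases hvr : v = T.root
  · have : 0 < #T.leaves := card_leaves_pos
    rw [hvr, hφ.1 i]
    positivity
  obtain ⟨c₀, c₁, -, hcc, hval⟩ := hφ.2 v hv hvr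
  have := cast_card_Ldesc_pos c₀
  have := cast_card_Ldesc_pos c₁
  have := cast_card_Ldesc_pos v
  rw [hval i]
  split_ifs with h₀ h₁
  · positivity
  · exact neg_ne_zero.2 (by positivity)
  · rw [Ldesc_eq_union (mem_internal.1 hv) hcc, mem_union] at hi
    exact absurd hi (by tauto)

theorem apply_eq_apply_of_anc (hφ : T.IsHaarLike φ) {v w : Fin T.n} (hv : v ∈ T.internal)
    (hvw : T.Anc v w) (hne : v ≠ w) {i j : T.Leaf} (hi : i.1 ∈ T.Ldesc w)
    (hj : j.1 ∈ T.Ldesc w) : φ v i = φ v j := by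
  by_cases hvr : v = T.root
  · rw [hvr, hφ.1 i, hφ.1 j]
  obtain ⟨c₀, c₁, hcne, hcc, hval⟩ := hφ.2 v hv hvr
  obtain ⟨c, hc, hcw⟩ := exists_mem_children_anc hvw hne
  have hsub := Ldesc_subset_of_anc hcw
  have hc' := hc
  rw [hcc, mem_insert, mem_singleton] at hc'
  rcases hc' with rfl | rfl
  · rw [hval i, hval j, if_pos (hsub hi), if_pos (hsub hj)]
  · have hdisj := disjoint_Ldesc_of_mem_children hc (by rw [hcc]; simp) hcne.symm
    rw [hval i, hval j, if_neg (disjoint_left.1 hdisj (hsub hi)),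
      if_neg (disjoint_left.1 hdisj (hsub hj)), if_pos (hsub hi), if_pos (hsub hj)]

theorem sum_leafDesc_self_eq_zero (hφ : T.IsHaarLike φ) {v : Fin T.n} (hv : v ∈ T.internal)
    (hvr : v ≠ T.root) : ∑ i ∈ T.leafDesc v, φ v i = 0 := by
  obtain ⟨n₀, n₁, h₀, h₁, hsum⟩ := hφ.exists_sum_leafDesc hv hvr
  rw [show ∑ i ∈ T.leafDesc v, φ v i = _ from hsum id, id, id, mul_neg,
    Real.mul_sqrt_div_mul_eq h₀ h₁ (by positivity), add_neg_cancel]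

theorem sum_mul_self (hφ : T.IsHaarLike φ) {v : Fin T.n} (hv : v ∈ T.internal) :
    ∑ i, φ v i * φ v i = 1 := by
  by_cases hvr : v = T.root
  · have hN : 0 < (#T.leaves : ℝ) := Nat.cast_pos.2 card_leaves_pos
    rw [hvr, sum_congr rfl fun i _ => by rw [hφ.1 i], sum_const, card_univ, Fintype.card_coe,
      nsmul_eq_mul, div_mul_div_comm, one_mul, Real.mul_self_sqrt hN.le, mul_one_div_cancel hN.ne']
  obtain ⟨n₀, n₁, h₀, h₁, hsum⟩ := hφ.exists_sum_leafDesc hv hvr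
  rw [sum_eq_sum_leafDesc fun i hi => by rw [hφ.apply_eq_zero hv hi, mul_zero],
    hsum fun x => x * x, neg_mul_neg, Real.mul_self_sqrt (by positivity),
    Real.mul_self_sqrt (by positivity)]
  field_simp
  ring

theorem sum_leafDesc_eq_card_mul_of_anc (hφ : T.IsHaarLike φ) {v w : Fin T.n}
    (hv : v ∈ T.internal) (hvw : T.Anc v w) (hne : v ≠ w) {j : T.Leaf} (hj : j.1 ∈ T.Ldesc w) :
    ∑ i ∈ T.leafDesc w, φ v i = #(T.Ldesc w) * φ v j :=
  sum_leafDesc_eq_card_mul fun _ hi =>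
    hφ.apply_eq_apply_of_anc hv hvw hne (mem_leafDesc.1 hi) hj

theorem sum_leafDesc_eq_zero (hφ : T.IsHaarLike φ) {v w : Fin T.n} (hv : v ∈ T.internal)
    (hw : w ≠ T.root) (hvw : ¬ (T.Anc v w ∧ v ≠ w)) : ∑ i ∈ T.leafDesc w, φ v i = 0 := by
  by_cases hwv : T.Anc w v
  · have hvr : v ≠ T.root := fun hvr => hw (eq_root_of_anc_root (hvr ▸ hwv))
    rw [← sum_eq_sum_leafDesc fun i hi => hφ.apply_eq_zero hv fun h =>
        hi (Ldesc_subset_of_anc hwv h),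
      sum_eq_sum_leafDesc fun i hi => hφ.apply_eq_zero hv hi, hφ.sum_leafDesc_self_eq_zero hv hvr]
  · have hvw' : ¬ T.Anc v w := fun h => hvw ⟨h, fun e => hwv (e ▸ anc_refl v)⟩
    exact sum_eq_zero fun i hi =>
      hφ.apply_eq_zero hv (disjoint_right.1 (disjoint_Ldesc hvw' hwv) (mem_leafDesc.1 hi))

theorem sum_mul_eq_zero_of_anc (hφ : T.IsHaarLike φ) {u v : Fin T.n} (hu : u ∈ T.internal)
    (hv : v ∈ T.internal) (huv : T.Anc u v) (hne : u ≠ v) : ∑ i, φ u i * φ v i = 0 := by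
  have hvr : v ≠ T.root := fun hvr => hne (eq_root_of_anc_root (hvr ▸ huv) ▸ hvr.symm)
  obtain ⟨j, hj⟩ := Ldesc_nonempty v
  rw [sum_eq_sum_leafDesc fun i hi => by rw [hφ.apply_eq_zero hv hi, mul_zero],
    sum_congr rfl fun i hi => by
      rw [hφ.apply_eq_apply_of_anc (j := ⟨j, (mem_Ldesc.1 hj).1⟩) hu huv hne
        (mem_leafDesc.1 hi) hj],
    ← mul_sum, hφ.sum_leafDesc_self_eq_zero hv hvr, mul_zero]

theorem sum_mul_eq_zero (hφ : T.IsHaarLike φ) {u v : Fin T.n} (hu : u ∈ T.internal)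
    (hv : v ∈ T.internal) (hne : u ≠ v) : ∑ i, φ u i * φ v i = 0 := by
  by_cases huv : T.Anc u v
  · exact hφ.sum_mul_eq_zero_of_anc hu hv huv hne
  by_cases hvu : T.Anc v u
  · simpa only [mul_comm] using hφ.sum_mul_eq_zero_of_anc hv hu hvu hne.symm
  refine sum_eq_zero fun i _ => ?_
  by_cases hi : i.1 ∈ T.Ldesc u
  · rw [hφ.apply_eq_zero hv (disjoint_left.1 (disjoint_Ldesc huv hvu) hi), mul_zero]
  · rw [hφ.apply_eq_zero hu hi, zero_mul]

theorem delta_mul_dotProduct (hφ : T.IsHaarLike φ) {v w : Fin T.n} (hv : v ∈ T.internal)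
    (hw : w ≠ T.root) (j : T.Leaf) : T.delta w j * (T.delta w ⬝ᵥ φ v) =
      if T.Anc w j ∧ T.Anc v w ∧ w ≠ v then #(T.Ldesc w) * φ v j else 0 := by
  rw [dotProduct_delta]
  by_cases hwj : T.Anc w j
  · by_cases hvw : T.Anc v w ∧ w ≠ v
    · rw [if_pos ⟨hwj, hvw⟩, delta, if_pos hwj, one_mul,
        hφ.sum_leafDesc_eq_card_mul_of_anc hv hvw.1 (Ne.symm hvw.2) (mem_Ldesc.2 ⟨j.2, hwj⟩)]
    · rw [if_neg (fun h => hvw h.2), hφ.sum_leafDesc_eq_zero hv hw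
        (fun h => hvw ⟨h.1, Ne.symm h.2⟩), mul_zero]
  · rw [if_neg (fun h => hwj h.1), delta, if_neg hwj, zero_mul]

theorem cov_mulVec (hφ : T.IsHaarLike φ) (ℓ : Fin T.n → ℝ) {v : Fin T.n}
    (hv : v ∈ T.internal) : T.cov ℓ *ᵥ φ v = fun j => T.lstar ℓ j.1 v * φ v j := by
  ext j
  rw [cov_mulVec_apply, sum_congr rfl fun w hw => by
      rw [hφ.delta_mul_dotProduct hv (mem_filter.1 hw).2 j, mul_ite, mul_zero],
    ← sum_filter, filter_filter]
  by_cases hj : j.1 ∈ T.Ldesc v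
  · rw [lstar_eq_sum (mem_Ldesc.1 hj).2, sum_mul]
    exact sum_congr rfl fun w _ => by ring
  · rw [hφ.apply_eq_zero hv hj]
    simp

theorem transpose_waveletMatrix_mul (hφ : T.IsHaarLike φ) :
    (T.waveletMatrix φ)ᵀ * T.waveletMatrix φ = 1 := by
  ext u v
  simp only [mul_apply, transpose_apply, waveletMatrix, of_apply]
  by_cases h : u = v
  · rw [h, one_apply_eq, hφ.sum_mul_self v.2]
  · rw [one_apply_ne h, hφ.sum_mul_eq_zero u.2 v.2 (Subtype.coe_injective.ne h)]

theorem waveletMatrix_mul_transpose (hT : T.IsORB) (hφ : T.IsHaarLike φ) :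
    T.waveletMatrix φ * (T.waveletMatrix φ)ᵀ = 1 :=
  (mul_eq_one_comm_of_card_eq _ _ _ (by simp [card_internal_eq_card_leaves hT])).1
    hφ.transpose_waveletMatrix_mul

theorem cov_mul_waveletMatrix_apply (hφ : T.IsHaarLike φ) (ℓ : Fin T.n → ℝ) (j : T.Leaf)
    (v : T.internal) : (T.cov ℓ * T.waveletMatrix φ) j v = T.lstar ℓ j.1 v * φ v j :=
  congrFun (hφ.cov_mulVec ℓ v.2) j

theorem cov_mul_waveletMatrix_apply_of_lstar_eq (hφ : T.IsHaarLike φ) {ℓ : Fin T.n → ℝ}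
    {v : T.internal} {c : ℝ} (hc : ∀ i ∈ T.Ldesc v, T.lstar ℓ i v = c) (j : T.Leaf) :
    (T.cov ℓ * T.waveletMatrix φ) j v = c * T.waveletMatrix φ j v := by
  rw [hφ.cov_mul_waveletMatrix_apply]
  by_cases hj : j.1 ∈ T.Ldesc v
  · rw [hc j hj, waveletMatrix, of_apply]
  · rw [waveletMatrix, of_apply, hφ.apply_eq_zero v.2 hj, mul_zero, mul_zero]

theorem traceBalanced_iff_isDiag (hT : T.IsORB) (hφ : T.IsHaarLike φ) (ℓ : Fin T.n → ℝ) :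
    T.TraceBalanced ℓ ↔ ((T.waveletMatrix φ)ᵀ * T.cov ℓ * T.waveletMatrix φ).IsDiag := by
  constructor
  · intro hbal
    have hcol : ∀ u v : T.internal, u ≠ v → v.1 ≠ T.root →
        ((T.waveletMatrix φ)ᵀ * T.cov ℓ * T.waveletMatrix φ) u v = 0 := by
      intro u v huv hvr
      obtain ⟨x, hx⟩ := Ldesc_nonempty v.1
      rw [Matrix.mul_assoc, mul_apply, sum_congr rfl fun j _ => by
          rw [hφ.cov_mul_waveletMatrix_apply_of_lstar_eq (hbal v v.2 hvr · · x hx) j,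
            mul_left_comm],
        ← mul_sum, ← mul_apply, hφ.transpose_waveletMatrix_mul, one_apply_ne huv, mul_zero]
    intro u v huv
    by_cases hvr : v.1 = T.root
    · rw [← (isSymm_transpose_mul_cov_mul ℓ _).apply]
      exact hcol v u huv.symm fun hur => huv (Subtype.ext (hur.trans hvr.symm))
    · exact hcol u v huv hvr
  · intro hdiag
    have hSW : T.cov ℓ * T.waveletMatrix φ = T.waveletMatrix φ *
        diagonal ((T.waveletMatrix φ)ᵀ * T.cov ℓ * T.waveletMatrix φ).diag := by
      rw [hdiag.diagonal_diag, ← Matrix.mul_assoc, ← Matrix.mul_assoc,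
        hφ.waveletMatrix_mul_transpose hT, Matrix.one_mul]
    have hlstar : ∀ v : T.internal, ∀ i ∈ T.Ldesc v,
        T.lstar ℓ i v = ((T.waveletMatrix φ)ᵀ * T.cov ℓ * T.waveletMatrix φ) v v := by
      intro v i hi
      have hcol := congrFun (congrFun hSW ⟨i, (mem_Ldesc.1 hi).1⟩) v
      rw [hφ.cov_mul_waveletMatrix_apply, mul_diagonal, waveletMatrix, of_apply, mul_comm] at hcol
      exact mul_left_cancel₀ (hφ.apply_ne_zero v.2 (i := ⟨i, _⟩) hi) hcol
    intro v hv _ i hi j hj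
    rw [hlstar ⟨v, hv⟩ i hi, hlstar ⟨v, hv⟩ j hj]

theorem cov_eq_of_lstar_eq (hT : T.IsORB) (hφ : T.IsHaarLike φ) {ℓ g : Fin T.n → ℝ}
    (hg : ∀ v ∈ T.internal, ∀ i ∈ T.Ldesc v, T.lstar ℓ i v = g v) :
    T.cov ℓ = T.waveletMatrix φ * diagonal (fun v : T.internal => g v) * (T.waveletMatrix φ)ᵀ := by
  have hSW : T.cov ℓ * T.waveletMatrix φ =
      T.waveletMatrix φ * diagonal (fun v : T.internal => g v) := by
    ext j v
    rw [mul_diagonal, hφ.cov_mul_waveletMatrix_apply_of_lstar_eq (hg v v.2) j, mul_comm]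
  rw [← hSW, Matrix.mul_assoc, hφ.waveletMatrix_mul_transpose hT, Matrix.mul_one]

end IsHaarLike

end RTree

open RTree Polynomial

theorem traceBalanced_iff_diagonalized_general (T : RTree) (hT : T.IsORB) (ℓ : Fin T.n → ℝ)
    (φ : Fin T.n → T.Leaf → ℝ) (hφ : T.IsHaarLike φ) :
    (T.TraceBalanced ℓ ↔
      ∀ u ∈ T.internal, ∀ v ∈ T.internal, u ≠ v →
        (∑ j : T.Leaf, ∑ i : T.Leaf, φ u j * T.cov ℓ j i * φ v i) = 0) ∧
    (T.TraceBalanced ℓ → ∀ g : Fin T.n → ℝ,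
      (∀ v ∈ T.internal, ∀ i ∈ T.Ldesc v, T.lstar ℓ i v = g v) →
      spectrum ℝ (T.cov ℓ) = g '' {v | v ∈ T.internal} ∧
      (T.cov ℓ).charpoly
        = ∏ v ∈ T.internal, (Polynomial.X - Polynomial.C (g v))) := by
  refine ⟨(hφ.traceBalanced_iff_isDiag hT ℓ).trans ⟨fun h u hu v hv huv => ?_,
    fun h u v huv => ?_⟩, fun _ g hg => ?_⟩
  · rw [← transpose_waveletMatrix_mul_mul_apply φ _ ⟨u, hu⟩ ⟨v, hv⟩]
    exact h fun e => huv (congrArg Subtype.val e)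
  · show ((T.waveletMatrix φ)ᵀ * T.cov ℓ * T.waveletMatrix φ) u v = 0
    rw [transpose_waveletMatrix_mul_mul_apply]
    exact h u u.2 v v.2 (Subtype.coe_injective.ne huv)
  have hchar : (T.cov ℓ).charpoly = ∏ v ∈ T.internal, (X - C (g v)) := by
    rw [hφ.cov_eq_of_lstar_eq hT hg, charpoly_mul_mul_of_mul_eq_one
      hφ.transpose_waveletMatrix_mul (by simp [card_internal_eq_card_leaves hT]),
      charpoly_diagonal, prod_coe_sort T.internal fun v => X - C (g v)]
  exact ⟨spectrum_eq_image_of_charpoly_eq_prod hchar, hchar⟩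

/-- `T` is trace-balanced iff the Haar-like basis diagonalizes its covariance matrix
`S`; in this case `σ(S) = {ℓ*(v,i) : v ∈ I}` and the multiplicity of each eigenvalue
`λ` is the number of internal nodes `v` with `ℓ*(v,i) = λ` (captured by the
characteristic polynomial factoring as `∏_{v ∈ I} (X - ℓ*(v,·))`). -/
theorem traceBalanced_iff_diagonalized (T : RTree) (hT : T.IsORB) (ℓ : Fin T.n → ℝ)
    (hℓ : ∀ v, 0 ≤ ℓ v) (hℓpos : ∀ v, T.IsLeaf v → 0 < ℓ v)
    (φ : Fin T.n → T.Leaf → ℝ) (hφ : T.IsHaarLike φ) :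
    (T.TraceBalanced ℓ ↔
      ∀ u ∈ T.internal, ∀ v ∈ T.internal, u ≠ v →
        (∑ j : T.Leaf, ∑ i : T.Leaf, φ u j * T.cov ℓ j i * φ v i) = 0) ∧
    (T.TraceBalanced ℓ → ∀ g : Fin T.n → ℝ,
      (∀ v ∈ T.internal, ∀ i ∈ T.Ldesc v, T.lstar ℓ i v = g v) →
      spectrum ℝ (T.cov ℓ) = g '' {v | v ∈ T.internal} ∧
      (T.cov ℓ).charpoly
        = ∏ v ∈ T.internal, (Polynomial.X - Polynomial.C (g v))) :=
  traceBalanced_iff_diagonalized_general T hT ℓ φ hφ
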